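/- Let R be a commutative ring, s a ring automorphism of R with s∘s = id, and A = R^s its fixed subring; assume there exists x ∈ R with s(x) = −x such that {1, x} is a basis of R as an A-module. Let B = R ⊗_A R, regarded as an R-bimodule via the outer factors. Then there exist R-bimodule homomorphisms u : R → B ⊗_R B and c : B ⊗_R B → R such that, under the identifications B ≅ R ⊗_R B and B ≅ B ⊗_R R, the compositions (id_B ⊗ c)∘(u ⊗ id_B) : B → B and (c ⊗ id_B)∘(id_B ⊗ u) : B → B both equal the identity of B. Explicitly, writing B ⊗_R B ≅ R ⊗_A R ⊗_A R, one may take c(r ⊗ r′ ⊗ r″) = r·ε(r′)·r″, where ε(a + xb) = b for a, b ∈ A, and u the bimodule map with u(1) = x⊗1⊗1 + 1⊗1⊗x. -/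

import Mathlib

/-!
Unit and counit for the Soergel bimodule `B = R ⊗_A R`, where `A = R^s` is the fixed subring of
an involution `s` of a commutative ring `R` and `R = A ⊕ xA` for an element `x` with `s x = -x`.
There are `R`-bimodule maps `u : R → B ⊗_R B` and `c : B ⊗_R B → R` (with `B ⊗_R B` identified
with `R ⊗_A R ⊗_A R`, the bimodule structures being via the outer factors) satisfying the
zig-zag identities `(id_B ⊗ c) ∘ (u ⊗ id_B) = id_B` and `(c ⊗ id_B) ∘ (id_B ⊗ u) = id_B`
(expressed on pure tensors under the identifications `B ≅ R ⊗_R B` and `B ≅ B ⊗_R R`);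
explicitly one may take `c (r ⊗ r' ⊗ r'') = r · ε(r') · r''` with `ε(a + xb) = b`, and `u` the
bimodule map with `u 1 = x ⊗ 1 ⊗ 1 + 1 ⊗ 1 ⊗ x`.
-/

open scoped TensorProduct

set_option synthInstance.maxHeartbeats 1000000
set_option maxHeartbeats 2000000

noncomputable section

variable (R : Type) [CommRing R] (s : R →+* R)

/-- The fixed subring `A = R^s` of the involution `s`. -/
def fixedSubring : Subring R := RingHom.eqLocus s (RingHom.id R)

local notation "A" => fixedSubring R s

/-- The Soergel bimodule `B = R ⊗_A R`. -/
abbrev SoergelB : Type := R ⊗[A] R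

/-- The triple tensor product `R ⊗_A R ⊗_A R`, identified with `B ⊗_R B`. -/
abbrev SoergelBB : Type := R ⊗[A] (R ⊗[A] R)

/-- Inclusion of `R` into `B = R ⊗_A R` as the left factor (left `R`-action). -/
def inclBLeft : R →ₐ[A] SoergelB R s := Algebra.TensorProduct.includeLeft

/-- Inclusion of `R` into `B = R ⊗_A R` as the right factor (right `R`-action). -/
def inclBRight : R →ₐ[A] SoergelB R s := Algebra.TensorProduct.includeRight

/-- Inclusion of `R` into `R ⊗_A R ⊗_A R` as the first factor (left `R`-action). -/
def inclTLeft : R →ₐ[A] SoergelBB R s := Algebra.TensorProduct.includeLeft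

/-- Inclusion of `R` into `R ⊗_A R ⊗_A R` as the last factor (right `R`-action). -/
def inclTRight : R →ₐ[A] SoergelBB R s :=
  (Algebra.TensorProduct.includeRight).comp Algebra.TensorProduct.includeRight

/-! The coordinate `ε (a + x b) = b` of `R = A ⊕ x A` is a Frobenius form for which `{1, x}` and
`{x, 1}` are dual bases: `r = ε (x r) • 1 + ε r • x`, because `x² ∈ A`. Expanding one tensor factor
in these bases gives `p ⊗ q = 1 ⊗ ε (x p) q + x ⊗ ε p q` and its mirror image, which are the two
zig-zag identities, and which also show that the Casimir element `x ⊗ 1 + 1 ⊗ x` of `R ⊗_A R`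
commutes with both actions of `R`, so that `u r = (r ⊗ 1 ⊗ 1) (x ⊗ 1 ⊗ 1 + 1 ⊗ 1 ⊗ x)` is also
right `R`-linear. -/

namespace Soergel

variable {S T : Type*} [CommRing S] [CommRing T] [Algebra S T]

theorem exists_coord {x : T}
    (hbasis : ∀ r : T, ∃! ab : S × S, r = algebraMap S T ab.1 + x * algebraMap S T ab.2) :
    ∃ ε : T →ₗ[S] S, ∀ a b : S, ε (algebraMap S T a + x * algebraMap S T b) = b := by
  let f : S × S →ₗ[S] T :=
    (Algebra.linearMap S T).coprod (LinearMap.mulLeft S x ∘ₗ Algebra.linearMap S T)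
  have hf : Function.Bijective f :=
    (Function.bijective_iff_existsUnique f).2 fun r => by simpa [f, eq_comm] using hbasis r
  let e := LinearEquiv.ofBijective f hf
  refine ⟨LinearMap.snd S S S ∘ₗ e.symm.toLinearMap, fun a b => ?_⟩
  have he : e (a, b) = algebraMap S T a + x * algebraMap S T b := by simp [e, f]
  simp only [LinearMap.coe_comp, Function.comp_apply, LinearEquiv.coe_coe, ← he,
    e.symm_apply_apply, LinearMap.snd_apply]

theorem coord_mul_smul_one_add_coord_smul {x : T} {ε : T →ₗ[S] S}
    (hε : ∀ a b : S, ε (algebraMap S T a + x * algebraMap S T b) = b)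
    (hspan : ∀ r : T, ∃ ab : S × S, r = algebraMap S T ab.1 + x * algebraMap S T ab.2)
    {q : S} (hq : algebraMap S T q = x * x) (r : T) :
    ε (x * r) • (1 : T) + ε r • x = r := by
  obtain ⟨⟨a, b⟩, rfl⟩ := hspan r
  have hxr : x * (algebraMap S T a + x * algebraMap S T b)
      = algebraMap S T (q * b) + x * algebraMap S T a := by
    rw [map_mul, hq]; ring
  rw [hxr, hε, hε, Algebra.smul_def, Algebra.smul_def]
  ring

theorem tmul_eq_one_tmul_add {x : T} {ε : T →ₗ[S] S}
    (hε : ∀ r : T, ε (x * r) • (1 : T) + ε r • x = r) (p q : T) :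
    p ⊗ₜ[S] q = (1 : T) ⊗ₜ (ε (x * p) • q) + x ⊗ₜ (ε p • q) := by
  conv_lhs => rw [← hε p]
  rw [TensorProduct.add_tmul, TensorProduct.smul_tmul, TensorProduct.smul_tmul]

theorem tmul_eq_add_tmul_one {x : T} {ε : T →ₗ[S] S}
    (hε : ∀ r : T, ε (x * r) • (1 : T) + ε r • x = r) (p q : T) :
    p ⊗ₜ[S] q = (ε (x * q) • p) ⊗ₜ (1 : T) + (ε q • p) ⊗ₜ x := by
  conv_lhs => rw [← hε q]
  rw [TensorProduct.tmul_add, TensorProduct.smul_tmul, TensorProduct.smul_tmul]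

def casimir (x : T) : T ⊗[S] T := x ⊗ₜ 1 + 1 ⊗ₜ x

theorem tmul_one_mul_casimir {x : T} {ε : T →ₗ[S] S}
    (hε : ∀ r : T, ε (x * r) • (1 : T) + ε r • x = r) (r : T) :
    (r ⊗ₜ[S] 1) * casimir x = (1 ⊗ₜ r) * casimir x := by
  simp only [casimir, mul_add, Algebra.TensorProduct.tmul_mul_tmul, one_mul, mul_one]
  calc (r * x) ⊗ₜ[S] (1 : T) + r ⊗ₜ x
      = (1 : T) ⊗ₜ (ε (x * (x * r)) • (1 : T)) + x ⊗ₜ (ε (x * r) • (1 : T))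
          + ((1 : T) ⊗ₜ (ε (x * r) • x) + x ⊗ₜ (ε r • x)) := by
        rw [mul_comm r x, tmul_eq_one_tmul_add hε (x * r), tmul_eq_one_tmul_add hε r]
    _ = x ⊗ₜ (ε (x * r) • (1 : T) + ε r • x)
          + (1 : T) ⊗ₜ (ε (x * (x * r)) • (1 : T) + ε (x * r) • x) := by
        simp only [TensorProduct.tmul_add]; abel
    _ = x ⊗ₜ r + 1 ⊗ₜ (r * x) := by rw [hε, hε, mul_comm r x]

def counit (ε : T →ₗ[S] S) : T ⊗[S] (T ⊗[S] T) →ₗ[S] T :=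
  LinearMap.mul' S T ∘ₗ
    TensorProduct.map LinearMap.id (TensorProduct.lid S T ∘ₗ TensorProduct.map ε LinearMap.id)

@[simp]
theorem counit_tmul (ε : T →ₗ[S] S) (r r' r'' : T) :
    counit ε (r ⊗ₜ (r' ⊗ₜ r'')) = r * algebraMap S T (ε r') * r'' := by
  simp [counit, Algebra.smul_def, mul_assoc]

theorem counit_tmul_one_mul (ε : T →ₗ[S] S) (r : T) (t : T ⊗[S] (T ⊗[S] T)) :
    counit ε ((r ⊗ₜ 1) * t) = r * counit ε t := by
  induction t using TensorProduct.induction_on with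
  | zero => simp
  | tmul p m =>
    induction m using TensorProduct.induction_on with
    | zero => simp
    | tmul q q' => simp [mul_assoc]
    | add m m' hm hm' => simp_all [TensorProduct.tmul_add, mul_add]
  | add t t' ht ht' => simp_all [mul_add]

theorem counit_mul_one_tmul (ε : T →ₗ[S] S) (r : T) (t : T ⊗[S] (T ⊗[S] T)) :
    counit ε (t * (1 ⊗ₜ (1 ⊗ₜ r))) = counit ε t * r := by
  induction t using TensorProduct.induction_on with
  | zero => simp
  | tmul p m =>
    induction m using TensorProduct.induction_on with
    | zero => simp
    | tmul q q' => simp [mul_assoc]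
    | add m m' hm hm' => simp_all [TensorProduct.tmul_add, add_mul]
  | add t t' ht ht' => simp_all [add_mul]

def unit (x : T) : T →ₗ[S] T ⊗[S] (T ⊗[S] T) :=
  LinearMap.mulRight S (x ⊗ₜ (1 ⊗ₜ 1) + 1 ⊗ₜ (1 ⊗ₜ x)) ∘ₗ
    (TensorProduct.mk S T (T ⊗[S] T)).flip 1

theorem unit_apply (x r : T) :
    unit x r = (r ⊗ₜ[S] 1) * (x ⊗ₜ (1 ⊗ₜ 1) + 1 ⊗ₜ (1 ⊗ₜ x)) := rfl

theorem unit_one (x : T) : unit (S := S) x 1 = x ⊗ₜ (1 ⊗ₜ 1) + 1 ⊗ₜ (1 ⊗ₜ x) := by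
  rw [unit_apply, ← Algebra.TensorProduct.one_def, one_mul]

theorem unit_mul_left (x r z : T) : unit x (r * z) = (r ⊗ₜ[S] 1) * unit x z := by
  rw [unit_apply, unit_apply, ← mul_assoc, Algebra.TensorProduct.tmul_mul_tmul, one_mul]

theorem unit_mul_right {x : T} {ε : T →ₗ[S] S}
    (hε : ∀ r : T, ε (x * r) • (1 : T) + ε r • x = r) (r z : T) :
    unit x (z * r) = unit x z * (1 ⊗ₜ[S] (1 ⊗ₜ r)) := by
  let φ : T ⊗[S] T →ₐ[S] T ⊗[S] (T ⊗[S] T) :=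
    Algebra.TensorProduct.map (AlgHom.id S T) Algebra.TensorProduct.includeRight
  have hcentral := congrArg φ (tmul_one_mul_casimir hε r)
  simp only [φ, casimir, map_mul, map_add, Algebra.TensorProduct.map_tmul, AlgHom.id_apply,
    Algebra.TensorProduct.includeRight_apply] at hcentral
  have hsplit : (z * r) ⊗ₜ[S] (1 : T ⊗[S] T) = (z ⊗ₜ 1) * (r ⊗ₜ (1 ⊗ₜ 1)) := by
    rw [Algebra.TensorProduct.tmul_mul_tmul, ← Algebra.TensorProduct.one_def, one_mul]
  rw [unit_apply, unit_apply, hsplit, mul_assoc, hcentral, mul_comm (1 ⊗ₜ[S] _), mul_assoc]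

theorem zigzag_left {x : T} {ε : T →ₗ[S] S}
    (hε : ∀ r : T, ε (x * r) • (1 : T) + ε r • x = r) (r r' : T) :
    (x ⊗ₜ[S] 1) * (1 ⊗ₜ counit ε (1 ⊗ₜ (r ⊗ₜ r'))) + 1 ⊗ₜ counit ε (1 ⊗ₜ ((x * r) ⊗ₜ r'))
      = r ⊗ₜ r' := by
  simp only [counit_tmul, Algebra.TensorProduct.tmul_mul_tmul, one_mul, mul_one]
  rw [tmul_eq_one_tmul_add hε r r', Algebra.smul_def, Algebra.smul_def, add_comm]

theorem zigzag_right {x : T} {ε : T →ₗ[S] S}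
    (hε : ∀ r : T, ε (x * r) • (1 : T) + ε r • x = r) (r r' : T) :
    counit ε (r ⊗ₜ ((r' * x) ⊗ₜ 1)) ⊗ₜ 1 + (counit ε (r ⊗ₜ (r' ⊗ₜ 1)) ⊗ₜ[S] 1) * (1 ⊗ₜ x)
      = r ⊗ₜ r' := by
  simp only [counit_tmul, Algebra.TensorProduct.tmul_mul_tmul, one_mul, mul_one]
  rw [tmul_eq_add_tmul_one hε r r', Algebra.smul_def, Algebra.smul_def, mul_comm r' x,
    mul_comm r, mul_comm r]

end Soergel

theorem soergel_unit_counit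
    (x : R) (hx : s x = -x)
    (hbasis : ∀ r : R, ∃! ab : A × A, r = (ab.1 : R) + x * (ab.2 : R)) :
    ∃ (u : R →+ SoergelBB R s) (c : SoergelBB R s →+ R),
      -- `u` is a map of `R`-bimodules
      (∀ r z : R, u (r * z) = inclTLeft R s r * u z) ∧
      (∀ r z : R, u (z * r) = u z * inclTRight R s r) ∧
      -- `c` is a map of `R`-bimodules
      (∀ (r : R) (t : SoergelBB R s), c (inclTLeft R s r * t) = r * c t) ∧
      (∀ (r : R) (t : SoergelBB R s), c (t * inclTRight R s r) = c t * r) ∧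
      -- the explicit formulas for `u` and `c`
      (u 1 = x ⊗ₜ[A] ((1 : R) ⊗ₜ[A] (1 : R)) + (1 : R) ⊗ₜ[A] ((1 : R) ⊗ₜ[A] x)) ∧
      (∀ (a b : A) (r r'' : R),
        c (r ⊗ₜ[A] ((((a : R) + x * (b : R))) ⊗ₜ[A] r'')) = r * (b : R) * r'') ∧
      -- zig-zag identity `(id_B ⊗ c) ∘ (u ⊗ id_B) = id_B`, on pure tensors of `B`
      (∀ r r' : R,
        (x ⊗ₜ[A] (1 : R)) * inclBRight R s (c ((1 : R) ⊗ₜ[A] (r ⊗ₜ[A] r')))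
          + inclBRight R s (c ((1 : R) ⊗ₜ[A] ((x * r) ⊗ₜ[A] r'))) = r ⊗ₜ[A] r') ∧
      -- zig-zag identity `(c ⊗ id_B) ∘ (id_B ⊗ u) = id_B`, on pure tensors of `B`
      (∀ r r' : R,
        inclBLeft R s (c (r ⊗ₜ[A] ((r' * x) ⊗ₜ[A] (1 : R))))
          + inclBLeft R s (c (r ⊗ₜ[A] (r' ⊗ₜ[A] (1 : R)))) * ((1 : R) ⊗ₜ[A] x)
          = r ⊗ₜ[A] r') := by
  have hxx : x * x ∈ A := by
    change s (x * x) = x * x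
    rw [map_mul, hx, neg_mul_neg]
  obtain ⟨ε, hεcoord⟩ := Soergel.exists_coord hbasis
  have hε := Soergel.coord_mul_smul_one_add_coord_smul hεcoord
    (fun r => (hbasis r).exists) (q := ⟨x * x, hxx⟩) rfl
  refine ⟨(Soergel.unit x).toAddMonoidHom, (Soergel.counit ε).toAddMonoidHom,
    Soergel.unit_mul_left x, Soergel.unit_mul_right hε, Soergel.counit_tmul_one_mul ε,
    Soergel.counit_mul_one_tmul ε, Soergel.unit_one x, fun a b r r'' => ?_,
    Soergel.zigzag_left hε, Soergel.zigzag_right hε⟩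
  exact (Soergel.counit_tmul ε _ _ _).trans
    (congrArg (fun b => r * algebraMap A R b * r'') (hεcoord a b))

end
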